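/- With T = ⌈log²S⌉, the variance of the estimator B̂ = S(T-1)/(L-1) satisfies Var[B̂] = O(B²/log²S) as S → ∞, uniformly over B with T ≤ B ≤ S. -/

import Mathlib

open Finset

/-- The probability mass function of the negative hypergeometric distribution
`NHG(S, G, T)`. -/
noncomputable def nhgWeight (S G T g : ℕ) : ℝ :=
  (Nat.choose (g + T - 1) g * Nat.choose (S - T - g) (G - g) : ℝ) / (Nat.choose S G : ℝ)

/-- The choice `T = ⌈log² S⌉` used by the algorithm. -/
noncomputable def Tof (S : ℕ) : ℕ := ⌈(Real.log S) ^ 2⌉₊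

/-- The variance of the estimator `B̂ = S(T-1)/(L-1)`, where `L = Y + T` with
`Y ~ NHG(S, S - B, T)` and `T = ⌈log² S⌉`. -/
noncomputable def varBhat (S B : ℕ) : ℝ :=
  (∑ g ∈ Finset.range (S - B + 1),
      ((S : ℝ) * ((Tof S : ℝ) - 1) / ((g : ℝ) + (Tof S : ℝ) - 1)) ^ 2
        * nhgWeight S (S - B) (Tof S) g)
  - (∑ g ∈ Finset.range (S - B + 1),
      ((S : ℝ) * ((Tof S : ℝ) - 1) / ((g : ℝ) + (Tof S : ℝ) - 1))
        * nhgWeight S (S - B) (Tof S) g) ^ 2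

/-!
The weights of `Y = L - T ~ NHG(S, G, T)` satisfy a size-biasing identity: with `B = S - G`,
`B̂(y) · NHG(S, G, T)(y) = B · NHG(S - 1, G, T - 1)(y)`, because
`(T - 1)/(y + T - 1) · C(y + T - 1, y) = C(y + T - 2, y)` and `S · C(S - 1, G) = B · C(S, G)`.
As NHG weights sum to one (upper Chu–Vandermonde), `B̂` is unbiased, and applying the identity
twice gives `E[B̂ · B̂'] = B(B - 1)`, where `B̂'` is the estimator for `(S - 1, T - 1)`.
Pointwise `B̂ ≤ S(T - 1)/((S - 1)(T - 2)) · B̂'`, so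
`Var[B̂] ≤ S(T - 1)/((S - 1)(T - 2)) · B(B - 1) - B² ≤ 6B²/T` for `3 ≤ T ≤ B ≤ S`,
and `T = ⌈log² S⌉ ≥ 3` as soon as `S ≥ 8`.
-/

open PowerSeries in
theorem sum_antidiagonal_choose_add_mul_choose_add (a b n : ℕ) :
    ∑ ij ∈ antidiagonal n, ((a + ij.1).choose a : ℝ) * ((b + ij.2).choose b : ℝ) =
      ((a + b + 1 + n).choose (a + b + 1) : ℝ) := by
  have h := congrArg (fun u => coeff n u.val) (invOneSubPow_add ℝ (a + 1) (b + 1))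
  rw [show a + 1 + (b + 1) = a + b + 1 + 1 by ring] at h
  simpa [invOneSubPow_val_succ_eq_mk_add_choose, coeff_mul] using h.symm

theorem sum_nhgWeight {S G T : ℕ} (hT : 0 < T) (hGT : G + T ≤ S) :
    ∑ g ∈ range (G + 1), nhgWeight S G T g = 1 := by
  obtain ⟨m, rfl⟩ : ∃ m, T = m + 1 := ⟨T - 1, by omega⟩
  obtain ⟨c, rfl⟩ : ∃ c, S = G + (m + c + 1) := ⟨S - G - m - 1, by omega⟩
  have hterm : ∀ g ∈ range (G + 1), nhgWeight (G + (m + c + 1)) G (m + 1) g =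
      ((m + g).choose m : ℝ) * ((c + (G - g)).choose c : ℝ) /
        ((G + (m + c + 1)).choose G : ℝ) := by
    intro g hg
    have hgG : g ≤ G := Nat.lt_succ_iff.mp (mem_range.mp hg)
    rw [nhgWeight, show g + (m + 1) - 1 = g + m by omega,
      show G + (m + c + 1) - (m + 1) - g = c + (G - g) by omega,
      Nat.choose_symm_add, add_comm g m, ← Nat.choose_symm_add (a := c)]
  have hpos : ((G + (m + c + 1)).choose G : ℝ) ≠ 0 :=
    Nat.cast_ne_zero.mpr (Nat.choose_pos (by omega)).ne'
  rw [sum_congr rfl hterm, ← sum_div, ← Nat.sum_antidiagonal_eq_sum_range_succ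
      (fun i j => ((m + i).choose m : ℝ) * ((c + j).choose c : ℝ)),
    sum_antidiagonal_choose_add_mul_choose_add, div_eq_one_iff_eq hpos,
    add_comm _ G, Nat.choose_symm_add]

theorem nhgWeight_nonneg (S G T g : ℕ) : 0 ≤ nhgWeight S G T g := by
  unfold nhgWeight
  positivity

-- `B̂ = S(T - 1)/(L - 1)` as a function of `y = L - T`.
noncomputable def bhat (S T g : ℕ) : ℝ := (S : ℝ) * ((T : ℝ) - 1) / ((g : ℝ) + (T : ℝ) - 1)

theorem bhat_nonneg {S T : ℕ} (hT : 1 ≤ T) (g : ℕ) : 0 ≤ bhat S T g := by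
  have hT' : (1 : ℝ) ≤ T := by exact_mod_cast hT
  have hg : (0 : ℝ) ≤ g := g.cast_nonneg
  exact div_nonneg (mul_nonneg S.cast_nonneg (by linarith)) (by linarith)

theorem bhat_mul_nhgWeight_succ {S G T : ℕ} (g : ℕ) (hT : 0 < T) (hG : G ≤ S) :
    bhat (S + 1) (T + 1) g * nhgWeight (S + 1) G (T + 1) g =
      ((S + 1 - G : ℕ) : ℝ) * nhgWeight S G T g := by
  have hlow : ((g + T - 1).choose g : ℝ) * (g + T) = ((g + T).choose g : ℝ) * T := by
    have h := Nat.choose_mul_succ_eq (g + T - 1) g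
    rw [show g + T - 1 + 1 = g + T by omega, show g + T - g = T by omega] at h
    exact_mod_cast h
  have hupp : (S.choose G : ℝ) * (S + 1) = ((S + 1).choose G : ℝ) * ((S + 1 - G : ℕ) : ℝ) := by
    exact_mod_cast Nat.choose_mul_succ_eq S G
  have hS : (S.choose G : ℝ) ≠ 0 := Nat.cast_ne_zero.mpr (Nat.choose_pos hG).ne'
  have hS1 : ((S + 1).choose G : ℝ) ≠ 0 := Nat.cast_ne_zero.mpr (Nat.choose_pos (by omega)).ne'
  have hgT : (g : ℝ) + T ≠ 0 := by positivity
  simp only [bhat, nhgWeight, Nat.add_sub_add_right, Nat.add_sub_cancel, ← add_assoc]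
  push_cast
  rw [add_sub_cancel_right, add_sub_assoc, add_sub_cancel_right]
  field_simp
  linear_combination ((S - T - g).choose (G - g) : ℝ) *
    (T * ((g + T).choose g : ℝ) * hupp - ((S + 1).choose G : ℝ) * ((S + 1 - G : ℕ) : ℝ) * hlow)

theorem sum_bhat_mul_nhgWeight {S G T : ℕ} (hT : 2 ≤ T) (hGT : G + T ≤ S) :
    ∑ g ∈ range (G + 1), bhat S T g * nhgWeight S G T g = ((S - G : ℕ) : ℝ) := by
  obtain ⟨S, rfl⟩ : ∃ S', S = S' + 1 := ⟨S - 1, by omega⟩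
  obtain ⟨T, rfl⟩ : ∃ T', T = T' + 1 := ⟨T - 1, by omega⟩
  rw [sum_congr rfl fun g _ => bhat_mul_nhgWeight_succ g (by omega) (by omega), ← mul_sum,
    sum_nhgWeight (by omega) (by omega), mul_one]

theorem sum_bhat_mul_bhat_mul_nhgWeight {S G T : ℕ} (hT : 3 ≤ T) (hGT : G + T ≤ S) :
    ∑ g ∈ range (G + 1), bhat S T g * bhat (S - 1) (T - 1) g * nhgWeight S G T g =
      ((S - G : ℕ) : ℝ) * ((S - 1 - G : ℕ) : ℝ) := by
  obtain ⟨S, rfl⟩ : ∃ S', S = S' + 1 := ⟨S - 1, by omega⟩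
  obtain ⟨T, rfl⟩ : ∃ T', T = T' + 1 := ⟨T - 1, by omega⟩
  simp only [Nat.add_sub_cancel]
  rw [← sum_bhat_mul_nhgWeight (S := S) (T := T) (by omega) (by omega), mul_sum]
  refine sum_congr rfl fun g _ => ?_
  rw [mul_comm (bhat _ _ g), mul_assoc, bhat_mul_nhgWeight_succ g (by omega) (by omega)]
  ring

theorem bhat_le_mul_bhat_pred {S T : ℕ} (hS : 2 ≤ S) (hT : 3 ≤ T) (g : ℕ) :
    bhat S T g ≤ S * (T - 1) / ((S - 1) * (T - 2)) * bhat (S - 1) (T - 1) g := by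
  have hS' : (2 : ℝ) ≤ S := by exact_mod_cast hS
  have hT' : (3 : ℝ) ≤ T := by exact_mod_cast hT
  have hg : (0 : ℝ) ≤ g := g.cast_nonneg
  have hcancel : S * (T - 1) / ((S - 1) * (T - 2)) * bhat (S - 1) (T - 1) g =
      S * (T - 1) / (g + T - 2) := by
    rw [bhat, Nat.cast_sub (by omega), Nat.cast_sub (by omega), Nat.cast_one, div_mul_div_comm,
      div_eq_div_iff
      (mul_ne_zero (mul_ne_zero (by linarith) (by linarith)) (by linarith)) (by linarith)]
    ring
  rw [hcancel, bhat]
  gcongr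
  · exact mul_nonneg (by linarith) (by linarith)
  · linarith
  · linarith

theorem second_moment_bound_sub_sq_le {s t b : ℝ} (ht : 3 ≤ t) (htb : t ≤ b) (hbs : b ≤ s) :
    s * (t - 1) / ((s - 1) * (t - 2)) * (b * (b - 1)) - b ^ 2 ≤ 6 * b ^ 2 / t := by
  have hratio : s * (t - 1) / ((s - 1) * (t - 2)) ≤ (t + 6) / t := by
    rw [div_le_div_iff₀ (by nlinarith) (by linarith)]
    nlinarith [mul_le_mul_of_nonneg_right (le_trans htb hbs) (by linarith : (0 : ℝ) ≤ 5 * t - 12)]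
  calc s * (t - 1) / ((s - 1) * (t - 2)) * (b * (b - 1)) - b ^ 2
      ≤ (t + 6) / t * (b * (b - 1)) - b ^ 2 := by gcongr; nlinarith
    _ ≤ (t + 6) / t * b ^ 2 - b ^ 2 := by gcongr; nlinarith
    _ = 6 * b ^ 2 / t := by field_simp; ring

noncomputable def bhatVariance (S B T : ℕ) : ℝ :=
  (∑ g ∈ range (S - B + 1), bhat S T g ^ 2 * nhgWeight S (S - B) T g)
    - (∑ g ∈ range (S - B + 1), bhat S T g * nhgWeight S (S - B) T g) ^ 2

theorem varBhat_eq_bhatVariance (S B : ℕ) : varBhat S B = bhatVariance S B (Tof S) := rfl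

theorem bhatVariance_le {S B T : ℕ} (hT : 3 ≤ T) (hTB : T ≤ B) (hBS : B ≤ S) :
    bhatVariance S B T ≤ 6 * B ^ 2 / T := by
  have hGT : S - B + T ≤ S := by omega
  have hmean := sum_bhat_mul_nhgWeight (T := T) (by omega) hGT
  have hfactorial := sum_bhat_mul_bhat_mul_nhgWeight hT hGT
  have hSG : S - (S - B) = B := by omega
  rw [hSG] at hmean
  rw [hSG, show S - 1 - (S - B) = B - 1 by omega, Nat.cast_sub (by omega : 1 ≤ B),
    Nat.cast_one] at hfactorial
  have hsecond : ∑ g ∈ range (S - B + 1), bhat S T g ^ 2 * nhgWeight S (S - B) T g ≤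
      S * (T - 1) / ((S - 1) * (T - 2)) * (B * (B - 1)) := by
    rw [← hfactorial, mul_sum]
    refine sum_le_sum fun g _ => ?_
    have hw := nhgWeight_nonneg S (S - B) T g
    have hb := bhat_nonneg (S := S) (by omega : 1 ≤ T) g
    calc bhat S T g ^ 2 * nhgWeight S (S - B) T g
        ≤ bhat S T g * (S * (T - 1) / ((S - 1) * (T - 2)) * bhat (S - 1) (T - 1) g) *
            nhgWeight S (S - B) T g := by
          rw [sq]; gcongr; exact bhat_le_mul_bhat_pred (by omega) hT g
      _ = _ := by ring
  rw [bhatVariance, hmean]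
  exact (sub_le_sub_right hsecond _).trans
    (second_moment_bound_sub_sq_le (by exact_mod_cast hT) (by exact_mod_cast hTB)
      (by exact_mod_cast hBS))

/-- **Asymptotic variance bound.** With `T = ⌈log² S⌉`, the variance of the
estimator `B̂ = S(T-1)/(L-1)` satisfies `Var[B̂] = O(B²/log² S)` as `S → ∞`,
uniformly over `B` with `T ≤ B ≤ S`. -/
theorem varBhat_asymptotic_bound :
    ∃ C : ℝ, 0 < C ∧ ∃ S₀ : ℕ, ∀ S : ℕ, S₀ ≤ S → ∀ B : ℕ,
      Tof S ≤ B → B ≤ S →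
      varBhat S B ≤ C * (B : ℝ) ^ 2 / (Real.log S) ^ 2 := by
  refine ⟨6, by norm_num, 8, fun S hS B hTB hBS => ?_⟩
  have hlog : 2 ≤ Real.log S := by
    rw [Real.le_log_iff_exp_le (by positivity)]
    have hS' : (8 : ℝ) ≤ S := by exact_mod_cast hS
    have he := Real.exp_one_lt_d9
    rw [show (2 : ℝ) = 1 + 1 by norm_num, Real.exp_add]
    nlinarith [Real.exp_pos 1]
  have hTof : Real.log S ^ 2 ≤ Tof S := Nat.le_ceil _
  have hT : 3 ≤ Tof S := by
    have : (2 : ℝ) < Tof S := by nlinarith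
    exact_mod_cast this
  calc varBhat S B ≤ 6 * B ^ 2 / Tof S := bhatVariance_le hT hTB hBS
    _ ≤ 6 * B ^ 2 / Real.log S ^ 2 := by gcongr
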